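/- arXiv:2207.08276 — 6 statements merged into one kernel-verified Lean document; each statement's English description precedes it below -/
import Mathlib

section
/- Under Cooper's truth tables, Import-Export holds as an extensional equivalence: for all truth values a,b,c ∈ {0,1/2,1}, f→(f∧'(a,b), c) = f→(a, f→(b,c)), where f∧' is quasi-conjunction and f→ is the Cooper conditional. -/
/-- The set of trivalent truth values {0, 1/2, 1} inside ℚ. -/
def Tri (x : ℚ) : Prop := x = 0 ∨ x = 1/2 ∨ x = 1

/-- Cooper conditional: f→(0,y)=1/2, f→(1,y)=y, f→(1/2,y)=y (on trivalent values). -/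
def tcond (a b : ℚ) : ℚ := if a = 0 then 1/2 else b

/-- Quasi-conjunction. -/
def tand (a b : ℚ) : ℚ :=
  if a = 0 ∨ b = 0 then 0 else if a = 1 ∨ b = 1 then 1 else 1/2

/-- Quasi-disjunction. -/
def tor (a b : ℚ) : ℚ :=
  if a = 1 ∨ b = 1 then 1 else if a = 0 ∨ b = 0 then 0 else 1/2

/-- Strong Kleene negation. -/
def tneg (a : ℚ) : ℚ := 1 - a

/-! The Cooper conditional only looks at whether its antecedent is false, and a quasi-conjunction
is false exactly when one of its conjuncts is; so both sides of Import-Export are `1/2` when `a` or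
`b` is false and `c` otherwise. -/

theorem tcond_zero (b : ℚ) : tcond 0 b = 1 / 2 := if_pos rfl

theorem tcond_of_ne_zero {a : ℚ} (ha : a ≠ 0) (b : ℚ) : tcond a b = b := if_neg ha

theorem tand_eq_zero_iff (a b : ℚ) : tand a b = 0 ↔ a = 0 ∨ b = 0 := by
  unfold tand
  split_ifs with hzero hone
  · simpa using hzero
  · simpa using hzero
  · norm_num [hzero]

theorem import_export_general (a b c : ℚ) :
    tcond (tand a b) c = tcond a (tcond b c) := by
  by_cases ha : a = 0
  · rw [ha, tcond_zero, (tand_eq_zero_iff 0 b).2 (Or.inl rfl), tcond_zero]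
  by_cases hb : b = 0
  · rw [hb, tcond_zero, (tand_eq_zero_iff a 0).2 (Or.inr rfl), tcond_zero, tcond_of_ne_zero ha]
  have hab : tand a b ≠ 0 := fun h => ((tand_eq_zero_iff a b).1 h).elim ha hb
  rw [tcond_of_ne_zero hab, tcond_of_ne_zero ha, tcond_of_ne_zero hb]

/-- Import-Export as extensional equivalence under Cooper's truth tables. -/
theorem import_export (a b c : ℚ) (ha : Tri a) (hb : Tri b) (hc : Tri c) :
    tcond (tand a b) c = tcond a (tcond b c) :=
  import_export_general a b c
end

section
/- Conditional Excluded Middle is valid in Cooper semantics with quasi-disjunction: for all a,b ∈ {0,1/2,1}, f∨'(f→(a,b), f→(a, f¬(b))) ≥ 1/2, i.e., the formula (A→B) ∨ (A→¬B) never takes the value 0. -/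
theorem half_le_tor_of_ne_zero {x y : ℚ} (hx : x ≠ 0) (hy : y ≠ 0) : 1/2 ≤ tor x y := by
  unfold tor
  split_ifs with h1 h0
  · norm_num
  · exact (h0.elim hx hy).elim
  · exact le_rfl

theorem half_le_tor_tneg {x : ℚ} (hx : Tri x) : 1/2 ≤ tor x (tneg x) := by
  rcases hx with rfl | rfl | rfl <;> norm_num [tor, tneg]

theorem conditional_excluded_middle_general (a b : ℚ) (hb : Tri b) :
    1/2 ≤ tor (tcond a b) (tcond a (tneg b)) := by
  by_cases ha : a = 0
  · simp only [tcond, if_pos ha]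
    exact half_le_tor_of_ne_zero (by norm_num) (by norm_num)
  · rw [tcond_of_ne_zero ha, tcond_of_ne_zero ha]
    exact half_le_tor_tneg hb

/-- Conditional Excluded Middle: (A→B) ∨' (A→¬B) always takes a designated value. -/
theorem conditional_excluded_middle (a b : ℚ) (ha : Tri a) (hb : Tri b) :
    1/2 ≤ tor (tcond a b) (tcond a (tneg b)) :=
  conditional_excluded_middle_general a b hb
end

section
/- With trivalent probability p defined as above and quasi-disjunction applied pointwise, probability is subadditive: p(v ∨' u) ≤ p(v) + p(u) for all truth assignments v, u : W → {0,1/2,1}, provided p(v∨'u), p(v), p(u) are all defined via positive denominators (i.e., each assignment takes a classical value on some world of positive weight). -/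
open Finset in
/-- Weight of the worlds where the assignment `v` takes the value `x`. -/
def wt {W : Type*} [Fintype W] (c : W → ℝ) (v : W → ℚ) (x : ℚ) : ℝ :=
  ∑ w ∈ Finset.univ.filter (fun w => v w = x), c w

/-- Trivalent probability of a truth assignment. -/
noncomputable def pv {W : Type*} [Fintype W] (c : W → ℝ) (v : W → ℚ) : ℝ :=
  if 0 < wt c v 1 + wt c v 0 then wt c v 1 / (wt c v 1 + wt c v 0) else 1

/-- Trivalent probability is subadditive over quasi-disjunction. -/
theorem prob_subadditive {W : Type*} [Fintype W] (c : W → ℝ)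
    (hc : ∀ w, 0 ≤ c w) (hsum : ∑ w, c w = 1)
    (v u : W → ℚ) (hv : ∀ w, Tri (v w)) (hu : ∀ w, Tri (u w))
    (hdv : 0 < wt c v 1 + wt c v 0) (hdu : 0 < wt c u 1 + wt c u 0)
    (hdvu : 0 < wt c (fun w => tor (v w) (u w)) 1 + wt c (fun w => tor (v w) (u w)) 0) :
    pv c (fun w => tor (v w) (u w)) ≤ pv c v + pv c u := by
  set t := fun w => tor (v w) (u w) with ht
  have hwt : ∀ (f : W → ℚ) x, wt c f x = ∑ w, if f w = x then c w else 0 := by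
    intro f x; rw [wt, Finset.sum_filter]
  have h1 : wt c t 1 ≤ wt c v 1 + wt c u 1 := by
    rw [hwt, hwt, hwt, ← Finset.sum_add_distrib]
    apply Finset.sum_le_sum
    intro w _
    rcases hv w with h|h|h <;> rcases hu w with h'|h'|h' <;>
      simp [ht, tor, h, h'] <;> linarith [hc w]
  have h2 : wt c v 1 + wt c v 0 ≤ wt c t 1 + wt c t 0 := by
    simp only [hwt, ← Finset.sum_add_distrib]
    apply Finset.sum_le_sum
    intro w _
    rcases hv w with h|h|h <;> rcases hu w with h'|h'|h' <;>
      simp [ht, tor, h, h'] <;> linarith [hc w]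
  have h3 : wt c u 1 + wt c u 0 ≤ wt c t 1 + wt c t 0 := by
    simp only [hwt, ← Finset.sum_add_distrib]
    apply Finset.sum_le_sum
    intro w _
    rcases hv w with h|h|h <;> rcases hu w with h'|h'|h' <;>
      simp [ht, tor, h, h'] <;> linarith [hc w]
  have hv1 : (0:ℝ) ≤ wt c v 1 := Finset.sum_nonneg fun w _ => hc w
  have hu1 : (0:ℝ) ≤ wt c u 1 := Finset.sum_nonneg fun w _ => hc w
  rw [pv, pv, pv, if_pos hdvu, if_pos hdv, if_pos hdu]
  have key : wt c t 1 / (wt c t 1 + wt c t 0)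
      ≤ wt c v 1 / (wt c t 1 + wt c t 0) + wt c u 1 / (wt c t 1 + wt c t 0) := by
    rw [← add_div]
    gcongr
  exact key.trans (add_le_add (by gcongr) (by gcongr))
end

section
/- Additivity characterization: for truth assignments v, u with positive-weight classical parts, p(v ∨' u) = p(v) + p(u) holds if the true-sets are disjoint up to null sets and the indeterminacy sets coincide up to null sets; formally, if c({w : v(w)=1} ∩ {w : u(w)=1}) = 0 and c({w : v(w)=1/2} Δ {w : u(w)=1/2}) = 0, then p(v∨'u) = p(v) + p(u). -/
/-
The quasi-disjunction is true exactly where one of its arguments is true, and it is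
indeterminate exactly where both are. Since `c` gives no mass to worlds where `v` and `u`
are both true, the true-weight of `v ∨' u` is the sum of those of `v` and `u`; since `c`
gives no mass to worlds where exactly one of them is indeterminate, `v`, `u` and `v ∨' u`
all have the same classical (true-or-false) weight. Dividing gives the claim.
-/

namespace Finset

variable {ι M : Type*} [AddCommMonoid M] (s : Finset ι) {p q : ι → Prop}
  [DecidablePred p] [DecidablePred q] {f : ι → M}

theorem sum_filter_congr_of_ne_zero (h : ∀ i ∈ s, f i ≠ 0 → (p i ↔ q i)) :
    ∑ i ∈ s.filter p, f i = ∑ i ∈ s.filter q, f i := by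
  rw [sum_filter, sum_filter]
  refine sum_congr rfl fun i hi => ?_
  by_cases hf : f i = 0
  · simp only [hf, ite_self]
  · simp only [h i hi hf]

theorem sum_filter_or_of_sum_filter_and_eq_zero
    (h : ∑ i ∈ s.filter (fun i => p i ∧ q i), f i = 0) :
    ∑ i ∈ s.filter (fun i => p i ∨ q i), f i =
      ∑ i ∈ s.filter p, f i + ∑ i ∈ s.filter q, f i := by
  classical
  rw [← sum_union_inter, ← filter_or, ← filter_and, h, add_zero]

end Finset

open Finset

theorem tor_eq_one_iff (a b : ℚ) : tor a b = 1 ↔ a = 1 ∨ b = 1 := by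
  unfold tor
  split_ifs <;> norm_num <;> tauto

theorem tri_tor (a b : ℚ) : Tri (tor a b) := by
  unfold tor Tri
  split_ifs <;> norm_num

theorem tor_ne_half_iff {a b : ℚ} (ha : Tri a) (hb : Tri b) :
    tor a b ≠ 1/2 ↔ a ≠ 1/2 ∨ b ≠ 1/2 := by
  rcases ha with rfl | rfl | rfl <;> rcases hb with rfl | rfl | rfl <;> norm_num [tor]

section Weights

variable {W : Type*} [Fintype W] (c : W → ℝ)

theorem eq_zero_of_sum_filter_eq_zero (hc : ∀ w, 0 ≤ c w) {p : W → Prop} [DecidablePred p]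
    (h : ∑ w ∈ univ.filter p, c w = 0) {w : W} (hw : p w) : c w = 0 :=
  (sum_eq_zero_iff_of_nonneg fun w _ => hc w).mp h w (mem_filter.mpr ⟨mem_univ w, hw⟩)

theorem pv_of_pos {v : W → ℚ} (h : 0 < wt c v 1 + wt c v 0) :
    pv c v = wt c v 1 / (wt c v 1 + wt c v 0) :=
  if_pos h

theorem wt_one_add_wt_zero {v : W → ℚ} (hv : ∀ w, Tri (v w)) :
    wt c v 1 + wt c v 0 = ∑ w ∈ univ.filter (fun w => v w ≠ 1/2), c w := by
  rw [wt, wt, sum_filter, sum_filter, sum_filter, ← sum_add_distrib]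
  refine sum_congr rfl fun w _ => ?_
  rcases hv w with h | h | h <;> norm_num [h]

theorem wt_tor_one (v u : W → ℚ) :
    wt c (fun w => tor (v w) (u w)) 1 = ∑ w ∈ univ.filter (fun w => v w = 1 ∨ u w = 1), c w := by
  simp only [wt, tor_eq_one_iff]

end Weights

open Finset in
theorem prob_additivity_general {W : Type*} [Fintype W] (c : W → ℝ)
    (hc : ∀ w, 0 ≤ c w)
    (v u : W → ℚ) (hv : ∀ w, Tri (v w)) (hu : ∀ w, Tri (u w))
    (hdv : 0 < wt c v 1 + wt c v 0)
    (hdisj : ∑ w ∈ Finset.univ.filter (fun w => v w = 1 ∧ u w = 1), c w = 0)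
    (hsym : ∑ w ∈ Finset.univ.filter
      (fun w => (v w = 1/2 ∧ ¬ u w = 1/2) ∨ (u w = 1/2 ∧ ¬ v w = 1/2)), c w = 0) :
    pv c (fun w => tor (v w) (u w)) = pv c v + pv c u := by
  have hhalf : ∀ w ∈ univ, c w ≠ 0 → (v w = 1/2 ↔ u w = 1/2) := fun w _ hw => by
    by_contra h
    exact hw (eq_zero_of_sum_filter_eq_zero c hc hsym (by tauto))
  have hden_u : wt c u 1 + wt c u 0 = wt c v 1 + wt c v 0 := by
    rw [wt_one_add_wt_zero c hu, wt_one_add_wt_zero c hv]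
    exact sum_filter_congr_of_ne_zero _ fun w hw hcw => not_congr (hhalf w hw hcw).symm
  have hden_tor : wt c (fun w => tor (v w) (u w)) 1 + wt c (fun w => tor (v w) (u w)) 0 =
      wt c v 1 + wt c v 0 := by
    rw [wt_one_add_wt_zero c fun w => tri_tor _ _, wt_one_add_wt_zero c hv]
    refine sum_filter_congr_of_ne_zero _ fun w hw hcw => ?_
    rw [tor_ne_half_iff (hv w) (hu w), ne_eq, ne_eq, hhalf w hw hcw, or_self]
  have hnum : wt c (fun w => tor (v w) (u w)) 1 = wt c v 1 + wt c u 1 := by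
    rw [wt_tor_one, sum_filter_or_of_sum_filter_and_eq_zero _ hdisj, wt, wt]
  rw [pv_of_pos c (hden_tor ▸ hdv), pv_of_pos c hdv, pv_of_pos c (hden_u ▸ hdv), hden_tor, hden_u,
    hnum, add_div]

open Finset in
/-- Additivity: if the true-sets are disjoint up to null sets and the indeterminacy
sets coincide up to null sets, then p(v ∨' u) = p(v) + p(u). -/
theorem prob_additivity {W : Type*} [Fintype W] (c : W → ℝ)
    (hc : ∀ w, 0 ≤ c w) (hsum : ∑ w, c w = 1)
    (v u : W → ℚ) (hv : ∀ w, Tri (v w)) (hu : ∀ w, Tri (u w))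
    (hdv : 0 < wt c v 1 + wt c v 0) (hdu : 0 < wt c u 1 + wt c u 0)
    (hdvu : 0 < wt c (fun w => tor (v w) (u w)) 1 + wt c (fun w => tor (v w) (u w)) 0)
    (hdisj : ∑ w ∈ Finset.univ.filter (fun w => v w = 1 ∧ u w = 1), c w = 0)
    (hsym : ∑ w ∈ Finset.univ.filter
      (fun w => (v w = 1/2 ∧ ¬ u w = 1/2) ∨ (u w = 1/2 ∧ ¬ v w = 1/2)), c w = 0) :
    pv c (fun w => tor (v w) (u w)) = pv c v + pv c u :=
  prob_additivity_general c hc v u hv hu hdv hdisj hsym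
end

section
/- Trivalent characterization of certainty preservation (Proposition 1, single-premise, semantic-set form): Let A, B be functions assigning to each world w ∈ W a truth value in {0,1/2,1}. Then the following are equivalent: (i) for every probability mass function c on the finite set W, if p_c(A)=1 then p_c(B)=1; (ii) for every w ∈ W, if A(w) ≥ 1/2 then B(w) ≥ 1/2 (equivalently, {w : B(w)=0} ⊆ {w : A(w)=0}). -/
lemma Tri.half_le_of_ne_zero {x : ℚ} (hx : Tri x) (h0 : x ≠ 0) : 1/2 ≤ x := by
  rcases hx with rfl | rfl | rfl <;> norm_num at *

lemma single_one_nonneg {W : Type*} [DecidableEq W] (w₀ w : W) :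
    0 ≤ (Pi.single w₀ 1 : W → ℝ) w := by
  rw [Pi.single_apply]
  split_ifs <;> norm_num

section

variable {W : Type*} [Fintype W] {c : W → ℝ}

lemma wt_eq_zero_iff (hc : ∀ w, 0 ≤ c w) (v : W → ℚ) (x : ℚ) :
    wt c v x = 0 ↔ ∀ w, v w = x → c w = 0 := by
  simp [wt, Finset.sum_eq_zero_iff_of_nonneg fun w _ => hc w]

/-- When `c` puts no mass on worlds where `v` is `0` or `1`, `pv c v = 1` holds through the default
value of `pv`. -/
lemma pv_eq_one_iff (hc : ∀ w, 0 ≤ c w) (v : W → ℚ) :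
    pv c v = 1 ↔ ∀ w, v w = 0 → c w = 0 := by
  rw [← wt_eq_zero_iff hc]
  have h1 : 0 ≤ wt c v 1 := Finset.sum_nonneg fun w _ => hc w
  have h0 : 0 ≤ wt c v 0 := Finset.sum_nonneg fun w _ => hc w
  unfold pv
  split_ifs with hpos
  · rw [div_eq_one_iff_eq hpos.ne']
    constructor <;> intro h <;> linarith
  · simp only [true_iff]
    linarith

lemma pv_single_eq_one_iff [DecidableEq W] (w₀ : W) (v : W → ℚ) :
    pv (Pi.single w₀ 1) v = 1 ↔ v w₀ ≠ 0 := by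
  rw [pv_eq_one_iff (single_one_nonneg _)]
  constructor
  · intro h hv
    simpa using h w₀ hv
  · intro hv w hw
    exact Pi.single_eq_of_ne (by rintro rfl; exact hv hw) _

end

theorem certainty_preservation_characterization_general {W : Type*} [Fintype W]
    (A B : W → ℚ) (hA : ∀ w, Tri (A w)) (hB : ∀ w, Tri (B w)) :
    (∀ c : W → ℝ, (∀ w, 0 ≤ c w) → (∑ w, c w) = 1 →
        pv c A = 1 → pv c B = 1) ↔
      (∀ w, 1/2 ≤ A w → 1/2 ≤ B w) := by
  classical
  constructor
  · intro h w hAw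
    have hpoint := h (Pi.single w 1) (single_one_nonneg _) (by simp)
    rw [pv_single_eq_one_iff, pv_single_eq_one_iff] at hpoint
    exact (hB w).half_le_of_ne_zero (hpoint (lt_of_lt_of_le (by norm_num) hAw).ne')
  · intro h c hc _ hpA
    rw [pv_eq_one_iff hc] at hpA ⊢
    intro w hBw
    refine hpA w (by_contra fun hAw => ?_)
    have hBhalf := h w ((hA w).half_le_of_ne_zero hAw)
    rw [hBw] at hBhalf
    norm_num at hBhalf

/-- Trivalent characterization of certainty-preserving inference (single premise). -/
theorem certainty_preservation_characterization {W : Type*} [Fintype W] [Nonempty W]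
    (A B : W → ℚ) (hA : ∀ w, Tri (A w)) (hB : ∀ w, Tri (B w)) :
    (∀ c : W → ℝ, (∀ w, 0 ≤ c w) → (∑ w, c w) = 1 →
        pv c A = 1 → pv c B = 1) ↔
      (∀ w, 1/2 ≤ A w → 1/2 ≤ B w) :=
  certainty_preservation_characterization_general A B hA hB
end

section
/- Possibility-preservation characterization (Proposition 2, semantic-set form): Let A, B : W → {0,1/2,1} be truth assignments on a finite set W, and suppose there exists a world w0 with B(w0)=0 (so that B is not certain under every distribution). Then the following are equivalent: (i) for every w, A(w)=1 implies B(w)=1; (ii) for every probability mass function c with c{A=1/2} < 1, if p_c(A) > 0 then p_c(B) > 0. -/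
open Finset

/-!
If every world making `A` true makes `B` true, any mass on `A = 1` is mass on `B = 1`, so
`p_c(A) > 0` forces `p_c(B) > 0`; the condition `c{A = 1/2} < 1` only excludes the degenerate
case in which `p_c(A)` takes its default value `1`. Conversely, a world `w` with `A w = 1` but
`B w ≠ 1`, together with a world `w0` where `B` is false, gives the counterexample
`c = ½ δ_w + ½ δ_w0`: then `p_c(A) > 0` while `p_c(B) = 0`.
-/

section Weight

variable {W : Type*} [Fintype W]

lemma wt_nonneg {c : W → ℝ} (hc : ∀ w, 0 ≤ c w) (v : W → ℚ) (x : ℚ) :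
    0 ≤ wt c v x :=
  sum_nonneg fun w _ => hc w

lemma wt_pos_iff {c : W → ℝ} (hc : ∀ w, 0 ≤ c w) (v : W → ℚ) (x : ℚ) :
    0 < wt c v x ↔ ∃ w, v w = x ∧ 0 < c w := by
  simp [wt, sum_pos_iff_of_nonneg fun w _ => hc w]

lemma wt_add (c d : W → ℝ) (v : W → ℚ) (x : ℚ) : wt (c + d) v x = wt c v x + wt d v x :=
  sum_add_distrib

lemma wt_pi_single [DecidableEq W] (w : W) (a : ℝ) (v : W → ℚ) (x : ℚ) :
    wt (Pi.single w a) v x = if v w = x then a else 0 := by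
  simp [wt, sum_pi_single']

lemma wt_zero_add_wt_half_add_wt_one (c : W → ℝ) {v : W → ℚ} (hv : ∀ w, Tri (v w)) :
    wt c v 0 + wt c v (1/2) + wt c v 1 = ∑ w, c w := by
  simp only [wt, sum_filter, ← sum_add_distrib]
  refine sum_congr rfl fun w _ => ?_
  rcases hv w with h | h | h <;> norm_num [h]

lemma pv_pos_iff {c : W → ℝ} (hc : ∀ w, 0 ≤ c w) (v : W → ℚ) :
    0 < pv c v ↔ 0 < wt c v 1 ∨ wt c v 1 + wt c v 0 = 0 := by
  have h1 := wt_nonneg hc v 1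
  have h0 := wt_nonneg hc v 0
  unfold pv
  split_ifs with hpos
  · rw [div_pos_iff_of_pos_right hpos]
    constructor
    · exact Or.inl
    · rintro (h | h) <;> [exact h; linarith]
  · simp only [zero_lt_one, true_iff]
    right
    linarith

end Weight

lemma exists_pv_pos_and_not_pv_pos {W : Type*} [Fintype W] {A B : W → ℚ} {w w0 : W}
    (hAw : A w = 1) (hBw : B w ≠ 1) (hBw0 : B w0 = 0) :
    ∃ c : W → ℝ, (∀ x, 0 ≤ c x) ∧ ∑ x, c x = 1 ∧ wt c A (1/2) < 1 ∧ 0 < pv c A ∧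
      ¬ 0 < pv c B := by
  classical
  set c : W → ℝ := Pi.single w (1/2) + Pi.single w0 (1/2)
  have hc : ∀ x, 0 ≤ c x := fun x => by
    simp only [c, Pi.add_apply, Pi.single_apply]
    split_ifs <;> norm_num
  have hwt : ∀ v x, wt c v x = (if v w = x then 1/2 else 0) + (if v w0 = x then 1/2 else 0) :=
    fun v x => by rw [wt_add, wt_pi_single, wt_pi_single]
  refine ⟨c, hc, ?_, ?_, ?_, ?_⟩
  · simp only [c, Pi.add_apply, sum_add_distrib, sum_pi_single', mem_univ, if_true]
    norm_num
  · rw [hwt, hAw, if_neg (by norm_num)]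
    split_ifs <;> norm_num
  · rw [pv_pos_iff hc, hwt, hAw, if_pos rfl]
    left
    split_ifs <;> norm_num
  · rw [pv_pos_iff hc, hwt, hwt, hBw0, if_neg hBw, if_neg zero_ne_one, if_pos rfl]
    split_ifs <;> norm_num

theorem possibility_preservation_characterization_general {W : Type*} [Fintype W]
    (A B : W → ℚ) (hA : ∀ w, Tri (A w))
    (hex : ∃ w0, B w0 = 0) :
    (∀ w, A w = 1 → B w = 1) ↔
      (∀ c : W → ℝ, (∀ w, 0 ≤ c w) → (∑ w, c w) = 1 →
        wt c A (1/2) < 1 → 0 < pv c A → 0 < pv c B) := by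
  constructor
  · intro hAB c hc hsum hhalf hpA
    have hdefined : wt c A 1 + wt c A 0 ≠ 0 := by
      have := wt_zero_add_wt_half_add_wt_one c hA
      linarith
    have hA1 : 0 < wt c A 1 := ((pv_pos_iff hc A).1 hpA).resolve_right hdefined
    obtain ⟨w, hw, hcw⟩ := (wt_pos_iff hc A 1).1 hA1
    exact (pv_pos_iff hc B).2 (Or.inl ((wt_pos_iff hc B 1).2 ⟨w, hAB w hw, hcw⟩))
  · intro h w hAw
    by_contra hBw
    obtain ⟨w0, hBw0⟩ := hex
    obtain ⟨c, hc, hsum, hhalf, hpA, hpB⟩ := exists_pv_pos_and_not_pv_pos hAw hBw hBw0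
    exact hpB (h c hc hsum hhalf hpA)

/-- Characterization of possibility-preserving inference. -/
theorem possibility_preservation_characterization {W : Type*} [Fintype W] [Nonempty W]
    (A B : W → ℚ) (hA : ∀ w, Tri (A w)) (hB : ∀ w, Tri (B w))
    (hex : ∃ w0, B w0 = 0) :
    (∀ w, A w = 1 → B w = 1) ↔
      (∀ c : W → ℝ, (∀ w, 0 ≤ c w) → (∑ w, c w) = 1 →
        wt c A (1/2) < 1 → 0 < pv c A → 0 < pv c B) :=
  possibility_preservation_characterization_general A B hA hex
end
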